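/- Let I ⊂ [0,1] be an interval and let f be a predictor such that for every v ∈ I and every group s ∈ [K], the conditional prediction law μ_{f|v,s} is supported in [−M, M], and the map v ↦ F_{f|v,s}(t) is L_cdf-Lipschitz on I uniformly in t ∈ ℝ. Define the pointwise unfairness U_v(f) := ∑_{s=1}^K w_s W₂²(μ_{f|v,s}, μ*_{f|v}), where μ*_{f|v} is the Wasserstein-2 barycenter of (μ_{f|v,s})_s with weights w ∈ Δ^{K−1}. Then v ↦ U_v(f) is Lipschitz on I with constant 16 M² L_cdf: |U_v(f) − U_{v'}(f)| ≤ 16 M² L_cdf |v − v'| for all v, v' ∈ I. -/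

import Mathlib

/-!
In dimension one everything is read off quantile functions. The barycenter is the push-forward
of the uniform law on `(0, 1)` under the weighted mean `G = ∑ₜ wₜ Qₜ` of the group quantile
functions; `G` is nondecreasing and left-continuous, so it is the barycenter's quantile function
and `U_v = ∑ₛ wₛ ∫₀¹ (Qₛ - G)²`. Since `|Qₛ - G| ≤ 2M`, factoring `a² - b² = (a - b)(a + b)`
bounds each term's variation by `4M ∫₀¹ |a - b|`, and `∫₀¹ |a - b|` is at most
`∫₀¹ |ΔQₛ| + ∑ₜ wₜ ∫₀¹ |ΔQₜ|`. Finally `∫₀¹ |Q_μ - Q_ν| = ∫ |F_μ - F_ν|`, which the support and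
Lipschitz assumptions bound by `2M L_cdf |v - v'|`.
-/

open MeasureTheory ProbabilityTheory Set

/-- Generalized (left-continuous) quantile function of a measure on ℝ. -/
noncomputable def quantile (μ : Measure ℝ) (u : ℝ) : ℝ :=
  sInf {x : ℝ | u ≤ cdf μ x}

/-- Squared Wasserstein-2 distance between measures on ℝ, via the quantile representation. -/
noncomputable def W2sq (μ ν : Measure ℝ) : ℝ :=
  ∫ u in Ioo (0:ℝ) 1, (quantile μ u - quantile ν u) ^ 2

/-- The one-dimensional Wasserstein-2 barycenter with weights `w`. -/
noncomputable def wassersteinBarycenter {K : ℕ} (w : Fin K → ℝ) (μ : Fin K → Measure ℝ) :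
    Measure ℝ :=
  Measure.map (fun u => ∑ s, w s * quantile (μ s) u) (volume.restrict (Ioo (0:ℝ) 1))

/-- Pointwise unfairness at level `v` of the family of conditional laws `μ v`. -/
noncomputable def pointwiseUnfairness {K : ℕ} (w : Fin K → ℝ)
    (μ : ℝ → Fin K → Measure ℝ) (v : ℝ) : ℝ :=
  ∑ s, w s * W2sq (μ v s) (wassersteinBarycenter w (μ v))

open Filter
open scoped symmDiff

section Quantile

variable {μ : Measure ℝ} {u x : ℝ}

lemma bddBelow_setOf_le_cdf (hu : 0 < u) : BddBelow {x | u ≤ cdf μ x} := by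
  obtain ⟨a, ha⟩ := eventually_atBot.1 ((tendsto_cdf_atBot μ).eventually (gt_mem_nhds hu))
  exact ⟨a, fun x hx => le_of_not_ge fun hxa => (ha x hxa).not_ge hx⟩

lemma nonempty_setOf_le_cdf (hu : u < 1) : {x | u ≤ cdf μ x}.Nonempty :=
  ((tendsto_cdf_atTop μ).eventually (lt_mem_nhds hu)).exists.imp fun _ h => h.le

lemma quantile_le_iff (hu : u ∈ Ioo 0 1) : quantile μ u ≤ x ↔ u ≤ cdf μ x := by
  refine ⟨fun h => ?_, fun h => csInf_le (bddBelow_setOf_le_cdf hu.1) h⟩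
  refine ge_of_tendsto (((cdf μ).right_continuous x).mono Ioi_subset_Ici_self)
    (eventually_nhdsWithin_of_forall fun y hy => ?_)
  obtain ⟨z, hz, hzy⟩ := exists_lt_of_csInf_lt (nonempty_setOf_le_cdf hu.2) (h.trans_lt hy)
  exact hz.trans (monotone_cdf μ hzy.le)

lemma setOf_le_cdf_eq_Ici (hu : u ∈ Ioo 0 1) : {x | u ≤ cdf μ x} = Ici (quantile μ u) := by
  ext x
  exact (quantile_le_iff hu).symm

lemma monotoneOn_quantile : MonotoneOn (quantile μ) (Ioo 0 1) := fun _ hu _ hu' huu' =>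
  csInf_le_csInf (bddBelow_setOf_le_cdf hu.1) (nonempty_setOf_le_cdf hu'.2)
    fun _ hx => huu'.trans hx

lemma aestronglyMeasurable_quantile :
    AEStronglyMeasurable (quantile μ) (volume.restrict (Ioo 0 1)) :=
  (aemeasurable_restrict_of_monotoneOn measurableSet_Ioo monotoneOn_quantile).aestronglyMeasurable

lemma exists_lt_quantile_of_lt_quantile (hu : u ∈ Ioo 0 1) (hx : x < quantile μ u) :
    ∃ u₀ ∈ Ioo 0 u, x < quantile μ u₀ := by
  by_contra! h
  refine hx.not_ge ((quantile_le_iff hu).2 (le_of_forall_lt fun u₀ hu₀ => ?_))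
  obtain ⟨u₁, hu₀u₁, hu₁⟩ := exists_between (max_lt hu₀ hu.1)
  have hu₁pos : 0 < u₁ := (le_max_right _ _).trans_lt hu₀u₁
  exact ((le_max_left _ _).trans_lt hu₀u₁).trans_le
    ((quantile_le_iff ⟨hu₁pos, hu₁.trans hu.2⟩).1 (h u₁ ⟨hu₁pos, hu₁⟩))

lemma continuousWithinAt_quantile (hu : u ∈ Ioo 0 1) :
    ContinuousWithinAt (quantile μ) (Iio u) u := by
  refine tendsto_order.2 ⟨fun x hx => ?_, fun x hx => ?_⟩
  · obtain ⟨u₀, hu₀, hxu₀⟩ := exists_lt_quantile_of_lt_quantile hu hx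
    filter_upwards [Ioo_mem_nhdsLT hu₀.2] with u' hu'
    exact hxu₀.trans_le (monotoneOn_quantile ⟨hu₀.1, hu₀.2.trans hu.2⟩
      ⟨hu₀.1.trans hu'.1, hu'.2.trans hu.2⟩ hu'.1.le)
  · filter_upwards [Ioo_mem_nhdsLT hu.1] with u' hu'
    exact (monotoneOn_quantile ⟨hu'.1, hu'.2.trans hu.2⟩ hu hu'.2.le).trans_lt hx

variable [IsProbabilityMeasure μ] {a b : ℝ}

lemma cdf_eq_zero_of_lt (h : μ (Icc a b)ᶜ = 0) (hx : x < a) : cdf μ x = 0 := by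
  have hsub : Iic x ⊆ (Icc a b)ᶜ := fun y hy hy' => (hy.trans_lt hx).not_ge hy'.1
  rw [cdf_eq_real, measureReal_eq_zero_iff]
  exact measure_mono_null hsub h

lemma cdf_eq_one_of_le (h : μ (Icc a b)ᶜ = 0) (hx : b ≤ x) : cdf μ x = 1 := by
  have hsub : (Iic x)ᶜ ⊆ (Icc a b)ᶜ := fun y hy hy' => hy (hy'.2.trans hx)
  have : μ (Iic x)ᶜ = 0 := measure_mono_null hsub h
  rw [cdf_eq_real, measureReal_def, (prob_compl_eq_zero_iff measurableSet_Iic).1 this,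
    ENNReal.toReal_one]

lemma quantile_mem_Icc (h : μ (Icc a b)ᶜ = 0) (hu : u ∈ Ioo 0 1) : quantile μ u ∈ Icc a b := by
  refine ⟨le_of_not_gt fun hlt => ?_, (quantile_le_iff hu).2 ?_⟩
  · have := (quantile_le_iff (μ := μ) hu).1 le_rfl
    rw [cdf_eq_zero_of_lt h hlt] at this
    exact hu.1.not_ge this
  · rw [cdf_eq_one_of_le h le_rfl]
    exact hu.2.le

end Quantile

lemma volume_Iic_symmDiff_Iic (a b : ℝ) : volume (Iic a ∆ Iic b) = ENNReal.ofReal |a - b| := by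
  wlog h : a ≤ b generalizing a b
  · rw [symmDiff_comm, abs_sub_comm]
    exact this b a (le_of_not_ge h)
  rw [symmDiff_of_le (Iic_subset_Iic.2 h), sdiff_eq, compl_Iic, Iic_inter_Ioi, Real.volume_Ioc,
    abs_sub_comm, abs_of_nonneg (sub_nonneg.2 h)]

lemma volume_Ici_symmDiff_Ici (a b : ℝ) : volume (Ici a ∆ Ici b) = ENNReal.ofReal |a - b| := by
  wlog h : b ≤ a generalizing a b
  · rw [symmDiff_comm, abs_sub_comm]
    exact this b a (le_of_not_ge h)
  rw [symmDiff_of_le (Ici_subset_Ici.2 h), Ici_sdiff_Ici, Real.volume_Ico,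
    abs_of_nonneg (sub_nonneg.2 h)]

/-- Both sides are the area of the region between the graphs of the two c.d.f.s, sliced
horizontally and vertically. -/
theorem lintegral_abs_quantile_sub_eq (μ ν : Measure ℝ) :
    ∫⁻ u in Ioo 0 1, ENNReal.ofReal |quantile μ u - quantile ν u| =
      ∫⁻ x, ENNReal.ofReal |cdf μ x - cdf ν x| := by
  set S : Set (ℝ × ℝ) := {p | p.1 ≤ cdf μ p.2} ∆ {p | p.1 ≤ cdf ν p.2}
  have hS : MeasurableSet S :=
    (measurableSet_le measurable_fst ((monotone_cdf μ).measurable.comp measurable_snd)).symmDiff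
      (measurableSet_le measurable_fst ((monotone_cdf ν).measurable.comp measurable_snd))
  have hsection : ∀ x, Iic (cdf μ x) ∆ Iic (cdf ν x) ⊆ Ioc 0 1 := by
    rintro x y (⟨hμ, hν⟩ | ⟨hν, hμ⟩)
    · exact ⟨(cdf_nonneg ν x).trans_lt (not_le.1 hν), hμ.trans (cdf_le_one μ x)⟩
    · exact ⟨(cdf_nonneg μ x).trans_lt (not_le.1 hμ), hν.trans (cdf_le_one ν x)⟩
  calc ∫⁻ u in Ioo 0 1, ENNReal.ofReal |quantile μ u - quantile ν u|
      = ∫⁻ u in Ioo 0 1, volume (Prod.mk u ⁻¹' S) := by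
        refine setLIntegral_congr_fun measurableSet_Ioo fun u hu => ?_
        change _ = volume ({x | u ≤ cdf μ x} ∆ {x | u ≤ cdf ν x})
        rw [setOf_le_cdf_eq_Ici hu, setOf_le_cdf_eq_Ici hu, volume_Ici_symmDiff_Ici]
    _ = (volume.restrict (Ioo 0 1)).prod volume S := (Measure.prod_apply hS).symm
    _ = ∫⁻ x, volume.restrict (Ioo 0 1) ((·, x) ⁻¹' S) := Measure.prod_apply_symm hS
    _ = ∫⁻ x, ENNReal.ofReal |cdf μ x - cdf ν x| := by
        refine lintegral_congr fun x => ?_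
        change volume.restrict (Ioo 0 1) (Iic (cdf μ x) ∆ Iic (cdf ν x)) = _
        rw [Measure.restrict_congr_set Ioo_ae_eq_Ioc, Measure.restrict_apply' measurableSet_Ioc,
          inter_eq_left.2 (hsection x), volume_Iic_symmDiff_Iic]

theorem integral_abs_quantile_sub_le {μ ν : Measure ℝ} [IsProbabilityMeasure μ]
    [IsProbabilityMeasure ν] {a b L : ℝ} (hμ : μ (Icc a b)ᶜ = 0) (hν : ν (Icc a b)ᶜ = 0)
    (hL : ∀ x, |cdf μ x - cdf ν x| ≤ L) :
    ∫ u in Ioo 0 1, |quantile μ u - quantile ν u| ≤ (b - a) * L := by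
  have hab : a ≤ b := by
    by_contra! hba
    simpa [cdf_eq_zero_of_lt hμ hba] using cdf_eq_one_of_le hμ le_rfl
  have hL0 : 0 ≤ L := (abs_nonneg _).trans (hL 0)
  have hbound : ∀ x, ENNReal.ofReal |cdf μ x - cdf ν x| ≤
      (Icc a b).indicator (fun _ => ENNReal.ofReal L) x := by
    intro x
    by_cases hx : x ∈ Icc a b
    · simpa [indicator_of_mem hx] using ENNReal.ofReal_le_ofReal (hL x)
    rcases not_and_or.1 hx with hxa | hxb
    · simp [cdf_eq_zero_of_lt hμ (not_le.1 hxa), cdf_eq_zero_of_lt hν (not_le.1 hxa)]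
    · simp [cdf_eq_one_of_le hμ (not_le.1 hxb).le, cdf_eq_one_of_le hν (not_le.1 hxb).le]
  have hm : AEStronglyMeasurable (fun u => |quantile μ u - quantile ν u|)
      (volume.restrict (Ioo 0 1)) :=
    (aestronglyMeasurable_quantile.sub aestronglyMeasurable_quantile).norm
  rw [integral_eq_lintegral_of_nonneg_ae (ae_of_all _ fun _ => abs_nonneg _) hm,
    lintegral_abs_quantile_sub_eq]
  refine ENNReal.toReal_le_of_le_ofReal (by positivity) ?_
  calc ∫⁻ x, ENNReal.ofReal |cdf μ x - cdf ν x|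
      ≤ ∫⁻ x, (Icc a b).indicator (fun _ => ENNReal.ofReal L) x := lintegral_mono hbound
    _ = ENNReal.ofReal ((b - a) * L) := by
        rw [lintegral_indicator_const measurableSet_Icc, Real.volume_Icc,
          ← ENNReal.ofReal_mul hL0, mul_comm]

instance : IsProbabilityMeasure (volume.restrict (Ioo (0 : ℝ) 1)) :=
  ⟨by simp [Real.volume_Ioo]⟩

theorem quantile_map_volume_Ioo {G : ℝ → ℝ} (hG : MonotoneOn G (Ioo 0 1))
    (hGc : ∀ u ∈ Ioo 0 1, ContinuousWithinAt G (Iio u) u) {u : ℝ} (hu : u ∈ Ioo 0 1) :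
    quantile ((volume.restrict (Ioo 0 1)).map G) u = G u := by
  have hGm : AEMeasurable G (volume.restrict (Ioo 0 1)) :=
    aemeasurable_restrict_of_monotoneOn measurableSet_Ioo hG
  have hcdf : ∀ x, ENNReal.ofReal (cdf ((volume.restrict (Ioo 0 1)).map G) x) =
      volume (G ⁻¹' Iic x ∩ Ioo 0 1) := by
    intro x
    have := Measure.isProbabilityMeasure_map hGm
    rw [ofReal_cdf, Measure.map_apply_of_aemeasurable hGm measurableSet_Iic,
      Measure.restrict_apply' measurableSet_Ioo]
  apply le_antisymm
  · rw [quantile_le_iff hu, ← ENNReal.ofReal_le_ofReal_iff (cdf_nonneg _ _), hcdf]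
    calc ENNReal.ofReal u = volume (Ioo 0 u) := by rw [Real.volume_Ioo, sub_zero]
      _ ≤ volume (G ⁻¹' Iic (G u) ∩ Ioo 0 1) := measure_mono fun u' hu' =>
          ⟨hG ⟨hu'.1, hu'.2.trans hu.2⟩ hu hu'.2.le, hu'.1, hu'.2.trans hu.2⟩
  · by_contra! hlt
    set x := quantile ((volume.restrict (Ioo 0 1)).map G) u
    obtain ⟨u₀, hxu₀, hu₀⟩ :=
      (((hGc u hu).eventually (lt_mem_nhds hlt)).and (Ioo_mem_nhdsLT hu.1)).exists
    have hcdf_le : cdf ((volume.restrict (Ioo 0 1)).map G) x ≤ u₀ := by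
      rw [← ENNReal.ofReal_le_ofReal_iff hu₀.1.le, hcdf]
      calc volume (G ⁻¹' Iic x ∩ Ioo 0 1) ≤ volume (Ioo 0 u₀) := measure_mono fun u' hu' =>
            ⟨hu'.2.1, lt_of_not_ge fun h =>
              (hxu₀.trans_le (hG ⟨hu₀.1, hu₀.2.trans hu.2⟩ hu'.2 h)).not_ge hu'.1⟩
        _ = ENNReal.ofReal u₀ := by rw [Real.volume_Ioo, sub_zero]
    linarith [(quantile_le_iff hu).1 (le_refl x), hu₀.2]

theorem quantile_wassersteinBarycenter {K : ℕ} {w : Fin K → ℝ} (hw : ∀ s, 0 ≤ w s)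
    (μs : Fin K → Measure ℝ) {u : ℝ} (hu : u ∈ Ioo 0 1) :
    quantile (wassersteinBarycenter w μs) u = ∑ s, w s * quantile (μs s) u := by
  refine quantile_map_volume_Ioo (fun _ hu _ hu' h => ?_) (fun _ hu => ?_) hu
  · exact Finset.sum_le_sum fun s _ =>
      mul_le_mul_of_nonneg_left (monotoneOn_quantile hu hu' h) (hw s)
  · exact tendsto_finsetSum _ fun s _ => (continuousWithinAt_quantile hu).const_mul (w s)

section WeightedDispersion

variable {α ι : Type*} [MeasurableSpace α] [Fintype ι] {ν : Measure α} {w : ι → ℝ}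

noncomputable def weightedDispersion (ν : Measure α) (w : ι → ℝ) (f : ι → α → ℝ) : ℝ :=
  ∑ s, w s * ∫ x, (f s x - ∑ t, w t * f t x) ^ 2 ∂ν

lemma abs_sum_mul_le_of_abs_le (hw : ∀ s, 0 ≤ w s) (hw1 : ∑ s, w s = 1) {y : ι → ℝ} {C : ℝ}
    (hy : ∀ s, |y s| ≤ C) : |∑ s, w s * y s| ≤ C :=
  calc |∑ s, w s * y s| ≤ ∑ s, |w s * y s| := Finset.abs_sum_le_sum_abs _ _
    _ ≤ ∑ s, w s * C := Finset.sum_le_sum fun s _ => by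
        rw [abs_mul, abs_of_nonneg (hw s)]
        exact mul_le_mul_of_nonneg_left (hy s) (hw s)
    _ = C := by rw [← Finset.sum_mul, hw1, one_mul]

lemma integral_abs_sum_mul_sub_sum_mul_le (hw : ∀ s, 0 ≤ w s) (hw1 : ∑ s, w s = 1)
    {f g : ι → α → ℝ} (hf : ∀ s, Integrable (f s) ν) (hg : ∀ s, Integrable (g s) ν) {δ : ℝ}
    (hfg : ∀ s, ∫ x, |f s x - g s x| ∂ν ≤ δ) :
    ∫ x, |∑ s, w s * f s x - ∑ s, w s * g s x| ∂ν ≤ δ := by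
  have hint : ∀ s, Integrable (fun x => w s * |f s x - g s x|) ν :=
    fun s => ((hf s).sub (hg s)).abs.const_mul (w s)
  calc ∫ x, |∑ s, w s * f s x - ∑ s, w s * g s x| ∂ν
      ≤ ∫ x, ∑ s, w s * |f s x - g s x| ∂ν := by
        refine integral_mono_of_nonneg (ae_of_all _ fun _ => abs_nonneg _)
          (integrable_finsetSum _ fun s _ => hint s) (ae_of_all _ fun x => ?_)
        simp only [← Finset.sum_sub_distrib, ← mul_sub]
        exact (Finset.abs_sum_le_sum_abs _ _).trans_eq
          (Finset.sum_congr rfl fun s _ => by rw [abs_mul, abs_of_nonneg (hw s)])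
    _ = ∑ s, w s * ∫ x, |f s x - g s x| ∂ν := by
        rw [integral_finsetSum _ fun s _ => hint s]
        simp only [integral_const_mul]
    _ ≤ ∑ s, w s * δ := Finset.sum_le_sum fun s _ => mul_le_mul_of_nonneg_left (hfg s) (hw s)
    _ = δ := by rw [← Finset.sum_mul, hw1, one_mul]

lemma abs_integral_sq_sub_integral_sq_le [IsFiniteMeasure ν] {f g : α → ℝ} {C : ℝ}
    (hf : AEStronglyMeasurable f ν) (hg : AEStronglyMeasurable g ν)
    (hfC : ∀ᵐ x ∂ν, |f x| ≤ C) (hgC : ∀ᵐ x ∂ν, |g x| ≤ C) :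
    |∫ x, f x ^ 2 ∂ν - ∫ x, g x ^ 2 ∂ν| ≤ 2 * C * ∫ x, |f x - g x| ∂ν := by
  have hfi : Integrable f ν := .of_bound hf C hfC
  have hgi : Integrable g ν := .of_bound hg C hgC
  have hf2 : Integrable (fun x => f x ^ 2) ν := .of_bound (hf.pow 2) (C ^ 2) <|
    hfC.mono fun x hx => by
      rw [Real.norm_eq_abs, abs_pow]
      exact pow_le_pow_left₀ (abs_nonneg _) hx 2
  have hg2 : Integrable (fun x => g x ^ 2) ν := .of_bound (hg.pow 2) (C ^ 2) <|
    hgC.mono fun x hx => by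
      rw [Real.norm_eq_abs, abs_pow]
      exact pow_le_pow_left₀ (abs_nonneg _) hx 2
  rw [← integral_sub hf2 hg2, ← integral_const_mul]
  refine (abs_integral_le_integral_abs).trans (integral_mono_of_nonneg
    (ae_of_all _ fun _ => abs_nonneg _) ((hfi.sub hgi).abs.const_mul _) ?_)
  filter_upwards [hfC, hgC] with x hfx hgx
  calc |f x ^ 2 - g x ^ 2| = |f x + g x| * |f x - g x| := by rw [sq_sub_sq, abs_mul]
    _ ≤ 2 * C * |f x - g x| := mul_le_mul_of_nonneg_right
        ((abs_add_le _ _).trans (by linarith)) (abs_nonneg _)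

theorem abs_weightedDispersion_sub_le [IsFiniteMeasure ν] (hw : ∀ s, 0 ≤ w s)
    (hw1 : ∑ s, w s = 1) {f g : ι → α → ℝ} {C δ : ℝ} (hC : 0 ≤ C)
    (hf : ∀ s, AEStronglyMeasurable (f s) ν) (hg : ∀ s, AEStronglyMeasurable (g s) ν)
    (hfC : ∀ s, ∀ᵐ x ∂ν, |f s x| ≤ C) (hgC : ∀ s, ∀ᵐ x ∂ν, |g s x| ≤ C)
    (hfg : ∀ s, ∫ x, |f s x - g s x| ∂ν ≤ δ) :
    |weightedDispersion ν w f - weightedDispersion ν w g| ≤ 8 * C * δ := by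
  have hfi : ∀ s, Integrable (f s) ν := fun s => .of_bound (hf s) C (hfC s)
  have hgi : ∀ s, Integrable (g s) ν := fun s => .of_bound (hg s) C (hgC s)
  have hmean : ∀ {h : ι → α → ℝ}, (∀ s, Integrable (h s) ν) →
      Integrable (fun x => ∑ t, w t * h t x) ν :=
    fun hi => integrable_finsetSum _ fun t _ => (hi t).const_mul (w t)
  have hdev : ∀ {h : ι → α → ℝ}, (∀ s, ∀ᵐ x ∂ν, |h s x| ≤ C) →
      ∀ s, ∀ᵐ x ∂ν, |h s x - ∑ t, w t * h t x| ≤ 2 * C := fun {h} hh s => by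
    filter_upwards [ae_all_iff.2 hh] with x hx
    linarith [abs_sub (h s x) (∑ t, w t * h t x), hx s, abs_sum_mul_le_of_abs_le hw hw1 hx]
  have hterm : ∀ s, |∫ x, (f s x - ∑ t, w t * f t x) ^ 2 ∂ν -
      ∫ x, (g s x - ∑ t, w t * g t x) ^ 2 ∂ν| ≤ 8 * C * δ := by
    intro s
    have hL1 : ∫ x, |(f s x - ∑ t, w t * f t x) - (g s x - ∑ t, w t * g t x)| ∂ν ≤ 2 * δ :=
      calc _ ≤ ∫ x, (|f s x - g s x| + |∑ t, w t * f t x - ∑ t, w t * g t x|) ∂ν :=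
            integral_mono_of_nonneg (ae_of_all _ fun _ => abs_nonneg _)
              (((hfi s).sub (hgi s)).abs.add ((hmean hfi).sub (hmean hgi)).abs)
              (ae_of_all _ fun x => by
                simpa only [sub_sub_sub_comm] using abs_sub _ _)
        _ = ∫ x, |f s x - g s x| ∂ν + ∫ x, |∑ t, w t * f t x - ∑ t, w t * g t x| ∂ν :=
            integral_add ((hfi s).sub (hgi s)).abs ((hmean hfi).sub (hmean hgi)).abs
        _ ≤ 2 * δ := by
            linarith [hfg s, integral_abs_sum_mul_sub_sum_mul_le hw hw1 hfi hgi hfg]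
    calc _ ≤ 2 * (2 * C) * ∫ x, |(f s x - ∑ t, w t * f t x) - (g s x - ∑ t, w t * g t x)| ∂ν :=
          abs_integral_sq_sub_integral_sq_le ((hf s).sub (hmean hfi).1) ((hg s).sub (hmean hgi).1)
            (hdev hfC s) (hdev hgC s)
      _ ≤ 2 * (2 * C) * (2 * δ) := mul_le_mul_of_nonneg_left hL1 (by positivity)
      _ = 8 * C * δ := by ring
  unfold weightedDispersion
  calc _ = |∑ s, w s * (∫ x, (f s x - ∑ t, w t * f t x) ^ 2 ∂ν -
        ∫ x, (g s x - ∑ t, w t * g t x) ^ 2 ∂ν)| := by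
        simp only [← Finset.sum_sub_distrib, mul_sub]
    _ ≤ 8 * C * δ := abs_sum_mul_le_of_abs_le hw hw1 hterm

end WeightedDispersion

lemma pointwiseUnfairness_eq_weightedDispersion {K : ℕ} {w : Fin K → ℝ} (hw : ∀ s, 0 ≤ w s)
    (μ : ℝ → Fin K → Measure ℝ) (v : ℝ) :
    pointwiseUnfairness w μ v =
      weightedDispersion (volume.restrict (Ioo 0 1)) w fun s => quantile (μ v s) := by
  refine Finset.sum_congr rfl fun s _ => congrArg (w s * ·) <|
    setIntegral_congr_fun measurableSet_Ioo fun u hu => ?_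
  rw [quantile_wassersteinBarycenter hw _ hu]

theorem unfairness_lipschitz_general {K : ℕ} (w : Fin K → ℝ)
    (hw : ∀ s, 0 ≤ w s) (hw1 : ∑ s, w s = 1)
    (M Lcdf : ℝ) (hM : 0 < M)
    (I : Set ℝ)
    (μ : ℝ → Fin K → Measure ℝ)
    (hprob : ∀ v ∈ I, ∀ s, IsProbabilityMeasure (μ v s))
    (hsupp : ∀ v ∈ I, ∀ s, μ v s (Icc (-M) M)ᶜ = 0)
    (hlip : ∀ s, ∀ t : ℝ, ∀ v ∈ I, ∀ v' ∈ I,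
      |cdf (μ v s) t - cdf (μ v' s) t| ≤ Lcdf * |v - v'|) :
    ∀ v ∈ I, ∀ v' ∈ I,
      |pointwiseUnfairness w μ v - pointwiseUnfairness w μ v'| ≤
        16 * M ^ 2 * Lcdf * |v - v'| := by
  intro v hv v' hv'
  have hbound : ∀ z ∈ I, ∀ s, ∀ᵐ u ∂volume.restrict (Ioo (0 : ℝ) 1), |quantile (μ z s) u| ≤ M :=
    fun z hz s =>
      have := hprob z hz s
      ae_restrict_of_forall_mem measurableSet_Ioo fun u hu =>
        abs_le.2 (quantile_mem_Icc (hsupp z hz s) hu)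
  have hL1 : ∀ s, ∫ u in Ioo 0 1, |quantile (μ v s) u - quantile (μ v' s) u| ≤
      (M - -M) * (Lcdf * |v - v'|) := fun s =>
    have := hprob v hv s
    have := hprob v' hv' s
    integral_abs_quantile_sub_le (hsupp v hv s) (hsupp v' hv' s) fun t => hlip s t v hv v' hv'
  rw [pointwiseUnfairness_eq_weightedDispersion hw, pointwiseUnfairness_eq_weightedDispersion hw]
  calc _ ≤ 8 * M * ((M - -M) * (Lcdf * |v - v'|)) :=
        abs_weightedDispersion_sub_le hw hw1 hM.le (fun _ => aestronglyMeasurable_quantile)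
          (fun _ => aestronglyMeasurable_quantile) (hbound v hv) (hbound v' hv') hL1
    _ = 16 * M ^ 2 * Lcdf * |v - v'| := by ring

/-- Lipschitz continuity of the unfairness: if the conditional prediction laws are supported
in `[−M, M]` and their c.d.f.s are `L_cdf`-Lipschitz in `v` on the interval `I ⊆ [0,1]`
uniformly in `t`, then `v ↦ U_v(f)` is `16 M² L_cdf`-Lipschitz on `I`. -/
theorem unfairness_lipschitz {K : ℕ} (w : Fin K → ℝ)
    (hw : ∀ s, 0 ≤ w s) (hw1 : ∑ s, w s = 1)
    (M Lcdf : ℝ) (hM : 0 < M) (hLcdf : 0 ≤ Lcdf)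
    (I : Set ℝ) (hI : I ⊆ Icc (0:ℝ) 1) (hIconn : I.OrdConnected)
    (μ : ℝ → Fin K → Measure ℝ)
    (hprob : ∀ v ∈ I, ∀ s, IsProbabilityMeasure (μ v s))
    (hsupp : ∀ v ∈ I, ∀ s, μ v s (Icc (-M) M)ᶜ = 0)
    (hlip : ∀ s, ∀ t : ℝ, ∀ v ∈ I, ∀ v' ∈ I,
      |cdf (μ v s) t - cdf (μ v' s) t| ≤ Lcdf * |v - v'|) :
    ∀ v ∈ I, ∀ v' ∈ I,
      |pointwiseUnfairness w μ v - pointwiseUnfairness w μ v'| ≤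
        16 * M ^ 2 * Lcdf * |v - v'| :=
  unfairness_lipschitz_general w hw hw1 M Lcdf hM I μ hprob hsupp hlip
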